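/- Let (W,g) be a finite-dimensional real vector space with a nondegenerate symmetric bilinear form, let c₊ ∈ ℝ and X₊ ∈ W with g(X₊,X₊) = 1 − c₊². Let ℱ₊ ∈ End(W ⊕ ℝ) be skew-symmetric with respect to g + g_can, satisfy ℱ₊(X₊, c₊) = 0, and satisfy ℱ₊² = −Id + (g+g_can)(·,(X₊,c₊)) (X₊,c₊). Then there exist unique X₋ ∈ W and J₊ ∈ End(W) such that ℱ₊(w,t) = (J₊w + tX₋, −g(X₋,w)) for all (w,t) ∈ W ⊕ ℝ; moreover J₊ is g-skew-symmetric, g(X₋,X₋) = 1 − c₊², g(X₊,X₋) = 0, J₊X₊ = −c₊X₋, J₊X₋ = c₊X₊, and J₊²w = −w + g(w,X₊)X₊ + g(w,X₋)X₋ for all w ∈ W. -/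
import Mathlib


/-- The bilinear form `g + g_can` on `W ⊕ ℝ`:
`(g+g_can)((w,s),(w',t)) = g(w,w') + st`. -/
noncomputable def sphW {W : Type*} [AddCommGroup W] [Module ℝ W]
    (g : LinearMap.BilinForm ℝ W) (p q : W × ℝ) : ℝ :=
  g p.1 q.1 + p.2 * q.2

/-- Structure lemma used in Proposition 4.2 ii): a `(g+g_can)`-skew-symmetric
endomorphism `ℱ₊` of `W ⊕ ℝ` with `ℱ₊(X₊,c₊) = 0` and
`ℱ₊² = −Id + (g+g_can)(·,(X₊,c₊))(X₊,c₊)` has the form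
`ℱ₊(w,t) = (J₊w + tX₋, −g(X₋,w))` for unique `X₋ ∈ W`, `J₊ ∈ End(W)`, with `J₊`
`g`-skew-symmetric, `g(X₋,X₋) = 1−c₊²`, `g(X₊,X₋) = 0`, `J₊X₊ = −c₊X₋`,
`J₊X₋ = c₊X₊`, and `J₊²w = −w + g(w,X₊)X₊ + g(w,X₋)X₋`. -/
theorem stmt_6 {W : Type*} [AddCommGroup W] [Module ℝ W] [FiniteDimensional ℝ W]
    (g : LinearMap.BilinForm ℝ W)
    (hgsymm : ∀ x y, g x y = g y x)
    (hgnd : ∀ x, (∀ y, g x y = 0) → x = 0)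
    (c : ℝ) (Xp : W)
    (hXp : g Xp Xp = 1 - c ^ 2)
    (F : (W × ℝ) →ₗ[ℝ] (W × ℝ))
    (hFskew : ∀ p q, sphW g (F p) q = - sphW g p (F q))
    (hFker : F (Xp, c) = 0)
    (hF2 : ∀ p, F (F p) = -p + sphW g p (Xp, c) • ((Xp, c) : W × ℝ)) :
    ∃ (Xm : W) (Jp : W →ₗ[ℝ] W),
      (∀ (w : W) (t : ℝ), F (w, t) = (Jp w + t • Xm, -(g Xm w))) ∧
      (∀ (X' : W) (J' : W →ₗ[ℝ] W),
        (∀ (w : W) (t : ℝ), F (w, t) = (J' w + t • X', -(g X' w))) →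
        X' = Xm ∧ J' = Jp) ∧
      (∀ x y, g (Jp x) y = - g x (Jp y)) ∧
      g Xm Xm = 1 - c ^ 2 ∧
      g Xp Xm = 0 ∧
      Jp Xp = -c • Xm ∧
      Jp Xm = c • Xp ∧
      (∀ w, Jp (Jp w) = -w + g w Xp • Xp + g w Xm • Xm) := by
  set Xm : W := (F (0, 1)).1 with hXm
  set Jp : W →ₗ[ℝ] W :=
    (LinearMap.fst ℝ W ℝ).comp (F.comp (LinearMap.inl ℝ W ℝ)) with hJp
  have hJdef : ∀ w : W, Jp w = (F (w, 0)).1 := fun w => rfl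
  -- second component of F(0,1) is 0
  have h01 : (F (0, 1)).2 = 0 := by
    have := hFskew (0, 1) (0, 1)
    simp [sphW] at this
    linarith
  -- second component formula
  have hsec : ∀ w : W, (F (w, 0)).2 = -(g Xm w) := by
    intro w
    have h := hFskew (w, 0) (0, 1)
    simp [sphW, hXm] at h
    rw [h, hgsymm]
  -- main formula
  have hform : ∀ (w : W) (t : ℝ), F (w, t) = (Jp w + t • Xm, -(g Xm w)) := by
    intro w t
    have : ((w, t) : W × ℝ) = (w, 0) + t • ((0, 1) : W × ℝ) := by
      simp [Prod.ext_iff]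
    rw [this, map_add, map_smul]
    ext
    · simp [hJdef, hXm]
    · simp [hsec, h01]
  -- from hFker
  have hker1 : Jp Xp + c • Xm = 0 ∧ g Xm Xp = 0 := by
    have := hFker
    rw [hform Xp c] at this
    constructor
    · exact congrArg Prod.fst this
    · have h2 := congrArg Prod.snd this
      simp at h2
      exact h2
  -- hF2 at (0,1): F(Xm, 0) = (c•Xp, c^2 - 1)
  have hF01 : Jp Xm = c • Xp ∧ g Xm Xm = 1 - c ^ 2 := by
    have h := hF2 (0, 1)
    have hF0 : F (0, 1) = (Xm, 0) := by
      ext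
      · rfl
      · exact h01
    rw [hF0, hform Xm 0] at h
    simp [sphW, Prod.ext_iff] at h
    obtain ⟨h1, h2⟩ := h
    constructor
    · simpa using h1
    · nlinarith [h2]
  refine ⟨Xm, Jp, hform, ?_, ?_, hF01.2, ?_, ?_, hF01.1, ?_⟩
  · -- uniqueness
    intro X' J' hX'
    have hXe : X' = Xm := by
      have h1 := hX' 0 1
      have h2 := hform 0 1
      rw [h1] at h2
      have := congrArg Prod.fst h2
      simpa using this
    refine ⟨hXe, ?_⟩
    ext w
    have h1 := hX' w 0
    have h2 := hform w 0
    rw [h1] at h2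
    have := congrArg Prod.fst h2
    simpa using this
  · -- skewness
    intro x y
    have h := hFskew (x, 0) (y, 0)
    rw [hform x 0, hform y 0] at h
    simpa [sphW] using h
  · -- g Xp Xm = 0
    rw [hgsymm]; exact hker1.2
  · -- Jp Xp = -c • Xm
    have := hker1.1
    have h : Jp Xp = -(c • Xm) := by
      rw [eq_neg_iff_add_eq_zero]; exact this
    rw [h, neg_smul]
  · -- J² formula
    intro w
    have h := hF2 (w, 0)
    rw [hform w 0] at h
    simp only [zero_smul, add_zero] at h
    rw [hform (Jp w) (-(g Xm w))] at h
    have h1 := congrArg Prod.fst h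
    simp [sphW] at h1
    rw [hgsymm w Xm]
    linear_combination (norm := module) h1
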